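/- arXiv:2504.15579 — 4 statements merged into one kernel-verified Lean document; each statement's English description precedes it below -/
import Mathlib

section
/- Let C be an abelian category and F an additive subfunctor of Ext^1 satisfying the 3×3-lemma property. Then F is closed, i.e., the class of F-deflations is closed under composition. Concretely: if g: B ↠ C and e: E ↠ B are F-deflations, then the composite g ∘ e: E ↠ C is an F-deflation. -/
open CategoryTheory CategoryTheory.Limits CategoryTheory.Abelian

universe w v u

variable {C : Type u} [Category.{v} C] [Abelian C] [HasExt.{w} C]

/-- An additive subfunctor of `Ext¹`, given by a set of extension classes in each
`Ext Z A 1`, which is an additive subgroup stable under pushout (composition with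
`Ext.mk₀ a` on the right) and pullback (composition with `Ext.mk₀ c` on the left). -/
structure IsAddSubfunctor (F : ∀ Z A : C, Set (Ext Z A 1)) : Prop where
  zero_mem : ∀ Z A : C, (0 : Ext Z A 1) ∈ F Z A
  add_mem : ∀ (Z A : C), ∀ δ₁ ∈ F Z A, ∀ δ₂ ∈ F Z A, δ₁ + δ₂ ∈ F Z A
  neg_mem : ∀ (Z A : C), ∀ δ ∈ F Z A, -δ ∈ F Z A
  push : ∀ (Z A A' : C) (a : A ⟶ A'), ∀ δ ∈ F Z A, δ.comp (Ext.mk₀ a) (add_zero 1) ∈ F Z A'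
  pull : ∀ (Z Z' A : C) (c : Z' ⟶ Z), ∀ δ ∈ F Z A, (Ext.mk₀ c).comp δ (zero_add 1) ∈ F Z' A

/-- `f` is an `F`-inflation if it is the mono of a short exact sequence whose
extension class lies in `F`. -/
def IsFInflation (F : ∀ Z A : C, Set (Ext Z A 1)) {A B : C} (f : A ⟶ B) : Prop :=
  ∃ (Z : C) (g : B ⟶ Z) (w : f ≫ g = 0) (hS : (ShortComplex.mk f g w).ShortExact),
    hS.extClass ∈ F Z A

/-- `g` is an `F`-deflation if it is the epi of a short exact sequence whose
extension class lies in `F`. -/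
def IsFDeflation (F : ∀ Z A : C, Set (Ext Z A 1)) {B Z : C} (g : B ⟶ Z) : Prop :=
  ∃ (A : C) (f : A ⟶ B) (w : f ≫ g = 0) (hS : (ShortComplex.mk f g w).ShortExact),
    hS.extClass ∈ F Z A

/-- `F` has the 3×3-lemma property: in any commutative 3×3 diagram of short exact
sequences in which all three columns and the two outer rows are `F`-exact,
the middle row is also `F`-exact. -/
def Has3x3 (F : ∀ Z A : C, Set (Ext Z A 1)) : Prop :=
  ∀ ⦃A B Z D E G H I J : C⦄
    (a : A ⟶ B) (b : B ⟶ Z) (d : D ⟶ E) (e : E ⟶ G) (g : H ⟶ I) (h : I ⟶ J)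
    (i : A ⟶ D) (j : B ⟶ E) (c : Z ⟶ G) (k : D ⟶ H) (l : E ⟶ I) (f : G ⟶ J)
    (w₁ : a ≫ b = 0) (w₂ : d ≫ e = 0) (w₃ : g ≫ h = 0)
    (v₁ : i ≫ k = 0) (v₂ : j ≫ l = 0) (v₃ : c ≫ f = 0)
    (_sq₁ : a ≫ j = i ≫ d) (_sq₂ : b ≫ c = j ≫ e)
    (_sq₃ : d ≫ l = k ≫ g) (_sq₄ : e ≫ f = l ≫ h)
    (h₁ : (ShortComplex.mk a b w₁).ShortExact)
    (h₂ : (ShortComplex.mk d e w₂).ShortExact)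
    (h₃ : (ShortComplex.mk g h w₃).ShortExact)
    (hc₁ : (ShortComplex.mk i k v₁).ShortExact)
    (hc₂ : (ShortComplex.mk j l v₂).ShortExact)
    (hc₃ : (ShortComplex.mk c f v₃).ShortExact),
    h₁.extClass ∈ F Z A → h₃.extClass ∈ F J H →
    hc₁.extClass ∈ F H A → hc₂.extClass ∈ F I B → hc₃.extClass ∈ F J Z →
    h₂.extClass ∈ F G D

/-!
Let `A ↣ E ↠ B` (with deflation `e`) and `K ↣ B ↠ Z` (with deflation `g`, inflation `k`) be
`F`-exact, and let `P := E ×_B K`. Then `P ↣ E ↠ Z` is the middle row of the 3×3 diagram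
```
A ═══ A ──→ 0
↓     ↓     ↓
P ──→ E ──→ Z
↓     ↓     ‖
K ──→ B ──→ Z
```
Its first column is the pullback of `A ↣ E ↠ B` along `k`, so its class is `k^* δ_e ∈ F`; the
row and column through `0` have zero class. The 3×3-lemma property makes the middle row `F`-exact.
-/

namespace CategoryTheory.ShortComplex

open ZeroObject

section

variable {𝒜 : Type*} [Category 𝒜] [Preadditive 𝒜] [HasZeroObject 𝒜]

lemma shortExact_id_zero (A : 𝒜) : (ShortComplex.mk (𝟙 A) (0 : A ⟶ 0) (by simp)).ShortExact :=
  (Splitting.ofIsIsoOfIsZero (S := ShortComplex.mk _ _ _) (inferInstanceAs (IsIso (𝟙 A)))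
    (isZero_zero 𝒜)).shortExact

lemma shortExact_zero_id (Z : 𝒜) : (ShortComplex.mk (0 : 0 ⟶ Z) (𝟙 Z) (by simp)).ShortExact :=
  (Splitting.ofIsZeroOfIsIso (S := ShortComplex.mk _ _ _) (isZero_zero 𝒜)
    (inferInstanceAs (IsIso (𝟙 Z)))).shortExact

end

section

variable {𝒜 : Type*} [Category 𝒜] [Abelian 𝒜] {S : ShortComplex 𝒜}

lemma ShortExact.pullback {K : 𝒜} (hS : S.ShortExact) (k : K ⟶ S.X₃) :
    (ShortComplex.mk (pullback.lift (f := S.g) (g := k) S.f 0 (by simp)) (pullback.snd S.g k)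
      (pullback.lift_snd _ _ _)).ShortExact := by
  have := hS.mono_f
  have := hS.epi_g
  have : Mono (pullback.lift (f := S.g) (g := k) S.f 0 (by simp)) :=
    mono_of_mono_fac (pullback.lift_fst _ _ _)
  refine .mk' (exact_of_f_is_kernel _ (KernelFork.IsLimit.ofι' _ _ fun t ht => ?_)) this
    inferInstance
  have ht' : (t ≫ pullback.fst S.g k) ≫ S.g = 0 := by
    rw [Category.assoc, pullback.condition, ← Category.assoc, ht, zero_comp]
  exact ⟨hS.exact.lift _ ht', by
    ext <;> simp only [Category.assoc, pullback.lift_fst, pullback.lift_snd, hS.exact.lift_f,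
      comp_zero, ht]⟩

lemma ShortExact.pullback_fst_comp_g {E : 𝒜} (hS : S.ShortExact) (e : E ⟶ S.X₂) [Epi e] :
    (ShortComplex.mk (pullback.fst e S.f) (e ≫ S.g)
      (by rw [pullback.condition_assoc, S.zero, comp_zero])).ShortExact := by
  have := hS.mono_f
  have := hS.epi_g
  refine .mk' (exact_of_f_is_kernel _ (KernelFork.IsLimit.ofι' _ _ fun t ht => ?_)) inferInstance
    (epi_comp e S.g)
  have ht' : (t ≫ e) ≫ S.g = 0 := by simpa using ht
  exact ⟨pullback.lift t (hS.exact.lift _ ht') (by simp), pullback.lift_fst _ _ _⟩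

end

lemma ShortExact.extClass_pullback {S : ShortComplex C} {K : C} (hS : S.ShortExact)
    (k : K ⟶ S.X₃) : (hS.pullback k).extClass = (Ext.mk₀ k).comp hS.extClass (zero_add 1) := by
  simpa using (hS.pullback k).extClass_naturality hS
    { τ₁ := 𝟙 _, τ₂ := pullback.fst S.g k, τ₃ := k
      comm₁₂ := by rw [Category.id_comp]; exact (pullback.lift_fst _ _ _).symm
      comm₂₃ := pullback.condition }

end CategoryTheory.ShortComplex

lemma IsAddSubfunctor.mem_of_eq_zero {F : ∀ Z A : C, Set (Ext Z A 1)} (hF : IsAddSubfunctor F)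
    {Z A : C} {δ : Ext Z A 1} (h : δ = 0) : δ ∈ F Z A :=
  h ▸ hF.zero_mem Z A

/-- If an additive subfunctor `F` of `Ext¹` satisfies the 3×3-lemma property, then
the class of `F`-deflations is closed under composition. -/
theorem three_by_three_implies_deflations_comp
    (F : ∀ Z A : C, Set (Ext Z A 1)) (hF : IsAddSubfunctor F)
    (h33 : Has3x3 F)
    {E B Z : C} (e : E ⟶ B) (g : B ⟶ Z)
    (he : IsFDeflation F e) (hg : IsFDeflation F g) :
    IsFDeflation F (e ≫ g) := by
  obtain ⟨A, f, wf, hS, hSF⟩ := he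
  obtain ⟨K, k, wk, hT, hTF⟩ := hg
  have := hS.epi_g
  have hP := hT.pullback_fst_comp_g e
  have hPF : (hS.pullback k).extClass ∈ F K A := by
    rw [hS.extClass_pullback k]
    exact hF.pull B K A k _ hSF
  exact ⟨_, _, _, hP, h33 _ _ _ _ _ _ _ _ _ _ _ _ _ _ _ _ _ _
    ((Category.id_comp f).trans (pullback.lift_fst _ _ _).symm) (by simp [reassoc_of% wf])
    pullback.condition (Category.comp_id _) (ShortComplex.shortExact_id_zero A) hP hT
    (hS.pullback k) hS (ShortComplex.shortExact_zero_id Z)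
    (hF.mem_of_eq_zero (Ext.eq_zero_of_projective _)) hTF hPF hSF
    (hF.mem_of_eq_zero (Ext.eq_zero_of_injective _))⟩
end

section
/- Let C be an abelian category and F a closed additive subfunctor of Ext^1. Given a commutative 3×3 diagram of short exact sequences in which all three columns are F-exact and both horizontal levels form morphisms of extensions (the top and bottom squares commute compatibly with the extension classes), the middle row is F-exact if and only if both the first and third rows are F-exact. -/
open CategoryTheory CategoryTheory.Limits CategoryTheory.Abelian

universe w v u

variable {C : Type u} [Category.{v} C] [Abelian C] [HasExt.{w} C]

/-- The class of `F`-inflations is closed under composition. -/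
def InflationsClosed (F : ∀ Z A : C, Set (Ext Z A 1)) : Prop :=
  ∀ ⦃A B D : C⦄ (f : A ⟶ B) (g : B ⟶ D),
    IsFInflation F f → IsFInflation F g → IsFInflation F (f ≫ g)

/-- The class of `F`-deflations is closed under composition. -/
def DeflationsClosed (F : ∀ Z A : C, Set (Ext Z A 1)) : Prop :=
  ∀ ⦃E B Z : C⦄ (e : E ⟶ B) (g : B ⟶ Z),
    IsFDeflation F e → IsFDeflation F g → IsFDeflation F (e ≫ g)


/-!
A morphism of short exact sequences `(τ₁, τ₂, τ₃)` relates their classes by `δ ∘ τ₁ = τ₃^* δ'`.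
Pushing out along an `F`-inflation `i` and pulling back along an `F`-deflation `g` reflect
membership in `F`: in the first case `i` followed by the pushed-out inflation is an `F`-inflation
through which the original inflation factors; in the second case the same happens with the
pulled-back inflation followed by the bicartesian inflation `Y ×_Z B ⟶ Y ⊞ B`, whose class is a
pushout of that of `g`. Hence `F`-exactness of the middle row passes to the outer rows along the
first and third columns, and `F`-deflations are closed under composition. Conversely, if the
outer rows are `F`-exact, the middle deflation `e` factors as `E ⟶ I ×_J G ⟶ G`: the first map
is the cokernel of the `F`-inflation `a ≫ j`, the second the pullback of the `F`-deflation `h`.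
-/

attribute [local simp] pullback.lift_fst pullback.lift_snd pushout.inl_desc pushout.inr_desc
  pullback.lift_fst_assoc pullback.lift_snd_assoc pushout.inl_desc_assoc pushout.inr_desc_assoc

section ShortExactSequences

variable {𝒜 : Type*} [Category 𝒜] [Abelian 𝒜]

lemma shortExact_pullback {S : ShortComplex 𝒜} (hS : S.ShortExact) {B : 𝒜} (g : B ⟶ S.X₃) :
    (ShortComplex.mk (pullback.lift S.f 0 (by simp) : S.X₁ ⟶ pullback S.g g)
      (pullback.snd S.g g) (by simp)).ShortExact := by
  have := hS.mono_f
  have := hS.epi_g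
  refine .mk' ?_ (mono_of_mono_fac (pullback.lift_fst _ _ _)) inferInstance
  rw [ShortComplex.exact_iff_exact_up_to_refinements]
  intro T x (hx : x ≫ pullback.snd S.g g = 0)
  obtain ⟨T', π, _, x₁, hx₁⟩ := hS.exact.exact_up_to_refinements (x ≫ pullback.fst S.g g)
    (by rw [Category.assoc, pullback.condition, reassoc_of% hx, zero_comp])
  exact ⟨T', π, inferInstance, x₁, by ext <;> simp [hx₁, hx]⟩

lemma shortExact_pushout {S : ShortComplex 𝒜} (hS : S.ShortExact) {D : 𝒜} (i : S.X₁ ⟶ D) :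
    (ShortComplex.mk (pushout.inr S.f i)
      (pushout.desc S.g 0 (by simp) : pushout S.f i ⟶ S.X₃) (by simp)).ShortExact := by
  have := hS.mono_f
  have := hS.epi_g
  have : Epi (pushout.desc S.g 0 (by simp) : pushout S.f i ⟶ S.X₃) :=
    epi_of_epi_fac (pushout.inl_desc _ _ _)
  refine .mk' ?_ inferInstance inferInstance
  refine ShortComplex.exact_of_g_is_cokernel _ (CokernelCofork.IsColimit.ofπ' _ _ ?_)
  intro T t (ht : pushout.inr S.f i ≫ t = 0)
  refine ⟨hS.exact.desc (pushout.inl S.f i ≫ t) ?_, ?_⟩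
  · rw [pushout.condition_assoc, ht, comp_zero]
  · ext <;> simp [ht]

open Abelian.PullbackToBiproductIsKernel in
lemma shortExact_pullbackToBiproduct {X Y Z : 𝒜} (f : X ⟶ Z) (g : Y ⟶ Z) [Epi f] :
    (ShortComplex.mk (pullbackToBiproduct f g) (biprod.desc f (-g))
      (pullbackToBiproductFork f g).condition).ShortExact :=
  .mk' (ShortComplex.exact_of_f_is_kernel _ (isLimitPullbackToBiproduct f g))
    (Fork.IsLimit.mono (isLimitPullbackToBiproduct f g)) (epi_of_epi_fac (biprod.inl_desc f (-g)))

end ShortExactSequences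

lemma extClass_naturality_homMk {S₁ S₂ : ShortComplex C} (h₁ : S₁.ShortExact)
    (h₂ : S₂.ShortExact) (τ₁ : S₁.X₁ ⟶ S₂.X₁) (τ₂ : S₁.X₂ ⟶ S₂.X₂) (τ₃ : S₁.X₃ ⟶ S₂.X₃)
    (comm₁₂ : τ₁ ≫ S₂.f = S₁.f ≫ τ₂) (comm₂₃ : τ₂ ≫ S₂.g = S₁.g ≫ τ₃) :
    h₁.extClass.comp (Ext.mk₀ τ₁) (add_zero 1) = (Ext.mk₀ τ₃).comp h₂.extClass (zero_add 1) :=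
  h₁.extClass_naturality h₂ (ShortComplex.homMk τ₁ τ₂ τ₃ comm₁₂ comm₂₃)

lemma extClass_shortExact_pullback {S : ShortComplex C} (hS : S.ShortExact) {B : C}
    (g : B ⟶ S.X₃) :
    (shortExact_pullback hS g).extClass = (Ext.mk₀ g).comp hS.extClass (zero_add 1) := by
  simpa using extClass_naturality_homMk (shortExact_pullback hS g) hS
    (𝟙 _) (pullback.fst S.g g) g (by simp) pullback.condition

lemma extClass_shortExact_pushout {S : ShortComplex C} (hS : S.ShortExact) {D : C}
    (i : S.X₁ ⟶ D) :
    (shortExact_pushout hS i).extClass = hS.extClass.comp (Ext.mk₀ i) (add_zero 1) := by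
  simpa using (extClass_naturality_homMk hS (shortExact_pushout hS i)
    i (pushout.inl S.f i) (𝟙 _) pushout.condition.symm (by simp)).symm

section SubfunctorClosure

variable {F : ∀ Z A : C, Set (Ext Z A 1)}

lemma extClass_mem_of_isFInflation_comp (hF : IsAddSubfunctor F) {S : ShortComplex C}
    (hS : S.ShortExact) {Y : C} {m : S.X₂ ⟶ Y} (hm : IsFInflation F (S.f ≫ m)) :
    hS.extClass ∈ F S.X₃ S.X₁ := by
  obtain ⟨Z, g, w, hT, hmem⟩ := hm
  have := hS.epi_g
  obtain ⟨t, ht⟩ := hS.exact.desc' (m ≫ g) (by simpa using w)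
  have hnat := extClass_naturality_homMk hS hT (𝟙 _) m t (by simp) ht.symm
  rw [Ext.comp_mk₀_id] at hnat
  exact hnat ▸ hF.pull _ _ _ t _ hmem

lemma IsFInflation.extClass_mem (hF : IsAddSubfunctor F) {S : ShortComplex C}
    (hS : S.ShortExact) (hf : IsFInflation F S.f) : hS.extClass ∈ F S.X₃ S.X₁ :=
  extClass_mem_of_isFInflation_comp hF hS (m := 𝟙 _) (by rwa [Category.comp_id])

lemma IsFDeflation.extClass_mem (hF : IsAddSubfunctor F) {S : ShortComplex C}
    (hS : S.ShortExact) (hg : IsFDeflation F S.g) : hS.extClass ∈ F S.X₃ S.X₁ := by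
  obtain ⟨A, f, w, hT, hmem⟩ := hg
  have := hS.mono_f
  obtain ⟨t, ht⟩ := hS.exact.lift' f w
  have hnat := extClass_naturality_homMk hT hS t (𝟙 _) (𝟙 _) (by simpa using ht)
    (by simp)
  rw [Ext.mk₀_id_comp] at hnat
  exact hnat ▸ hF.push _ _ _ t _ hmem

lemma extClass_mem_of_comp_mk₀_mem (hF : IsAddSubfunctor F) (hclosed : InflationsClosed F)
    {S : ShortComplex C} (hS : S.ShortExact) {D : C} {i : S.X₁ ⟶ D} (hi : IsFInflation F i)
    (h : hS.extClass.comp (Ext.mk₀ i) (add_zero 1) ∈ F S.X₃ D) :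
    hS.extClass ∈ F S.X₃ S.X₁ := by
  have hinr : IsFInflation F (pushout.inr S.f i) :=
    ⟨_, _, _, shortExact_pushout hS i, by rwa [extClass_shortExact_pushout]⟩
  apply extClass_mem_of_isFInflation_comp hF hS (m := pushout.inl S.f i)
  rw [pushout.condition]
  exact hclosed _ _ hi hinr

open Abelian.PullbackToBiproductIsKernel in
lemma extClass_mem_of_mk₀_comp_mem (hF : IsAddSubfunctor F) (hclosed : InflationsClosed F)
    {S : ShortComplex C} (hS : S.ShortExact) {B : C} {g : B ⟶ S.X₃} (hg : IsFDeflation F g)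
    (h : (Ext.mk₀ g).comp hS.extClass (zero_add 1) ∈ F B S.X₁) :
    hS.extClass ∈ F S.X₃ S.X₁ := by
  obtain ⟨N, n, w, hT, hmem⟩ := hg
  have := hS.epi_g
  have hlift : IsFInflation F (pullback.lift S.f 0 (by simp) : S.X₁ ⟶ pullback S.g g) :=
    ⟨_, _, _, shortExact_pullback hS g, by rwa [extClass_shortExact_pullback]⟩
  have hbiprod : IsFInflation F (pullbackToBiproduct S.g g) := by
    refine ⟨_, _, _, shortExact_pullbackToBiproduct S.g g, ?_⟩
    have hnat := extClass_naturality_homMk hT (shortExact_pullbackToBiproduct S.g g)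
      (pullback.lift 0 (-n) (by simp [w])) (-biprod.inr) (𝟙 _) (by ext <;> simp) (by simp)
    rw [Ext.mk₀_id_comp] at hnat
    exact hnat ▸ hF.push _ _ _ _ _ hmem
  apply extClass_mem_of_isFInflation_comp hF hS (m := biprod.inl)
  have hfac : pullback.lift S.f 0 (by simp) ≫ pullbackToBiproduct S.g g = S.f ≫ biprod.inl := by
    ext <;> simp
  exact hfac ▸ hclosed _ _ hlift hbiprod

lemma deflationsClosed_of_inflationsClosed (hF : IsAddSubfunctor F)
    (hclosed : InflationsClosed F) : DeflationsClosed F := by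
  rintro E B Z e g ⟨K, f, w, hT, hmem⟩ hg
  have := hT.epi_g
  have : Epi g := by obtain ⟨_, _, _, hU, _⟩ := hg; exact hU.epi_g
  have hS : (ShortComplex.mk _ _ (kernel.condition (e ≫ g))).ShortExact :=
    .mk' (ShortComplex.exact_of_f_is_kernel _ (kernelIsKernel _)) inferInstance (epi_comp e g)
  refine ⟨_, _, _, hS, extClass_mem_of_mk₀_comp_mem hF hclosed hS hg ?_⟩
  have hnat := extClass_naturality_homMk hT hS
    (kernel.lift _ f (by simp [reassoc_of% w])) (𝟙 _) g (by simp) (by simp)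
  exact hnat ▸ hF.push _ _ _ _ _ hmem

end SubfunctorClosure

section PullbackComparison

variable {𝒜 : Type*} [Category 𝒜] [Abelian 𝒜]

lemma exact_comp_pullback_lift {R S : ShortComplex 𝒜} (ψ : R ⟶ S) (hR : R.Exact) [Mono ψ.τ₃]
    {I J : 𝒜} {l : S.X₂ ⟶ I} {h : I ⟶ J} {f : S.X₃ ⟶ J} (sq : l ≫ h = S.g ≫ f)
    (hl : ψ.τ₂ ≫ l = 0) (hcol : (ShortComplex.mk ψ.τ₂ l hl).Exact) :
    (ShortComplex.mk (R.f ≫ ψ.τ₂) (pullback.lift l S.g sq)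
      (by ext <;> simp [hl, ψ.comm₂₃])).Exact := by
  rw [ShortComplex.exact_iff_exact_up_to_refinements]
  intro T x (hx : x ≫ pullback.lift l S.g sq = 0)
  have hxl : x ≫ l = 0 := by simpa using hx =≫ pullback.fst h f
  have hxg : x ≫ S.g = 0 := by simpa using hx =≫ pullback.snd h f
  obtain ⟨T₁, π₁, _, y, hy⟩ := hcol.exact_up_to_refinements x hxl
  have hyg : y ≫ R.g = 0 := by
    rw [← cancel_mono ψ.τ₃, Category.assoc, ← ψ.comm₂₃, zero_comp]
    simpa [hxg] using (congrArg (· ≫ S.g) hy).symm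
  obtain ⟨T₂, π₂, _, z, hz⟩ := hR.exact_up_to_refinements y hyg
  exact ⟨T₂, π₂ ≫ π₁, epi_comp _ _, z, by simp [hy, reassoc_of% hz]⟩

lemma epi_pullback_lift {S T : ShortComplex 𝒜} (φ : S ⟶ T) (hT : T.ShortExact) [Epi S.g]
    [Epi φ.τ₁] : Epi (pullback.lift φ.τ₂ S.g φ.comm₂₃) := by
  have := hT.epi_g
  let χ : S ⟶ ShortComplex.mk _ _ (pullback.lift_snd T.f 0 (by simp : T.f ≫ T.g = 0 ≫ φ.τ₃)) :=
    ⟨φ.τ₁, pullback.lift φ.τ₂ S.g φ.comm₂₃, 𝟙 _, by ext <;> simp [φ.comm₁₂], by simp⟩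
  exact ShortComplex.epi_τ₂_of_exact_of_epi χ (shortExact_pullback hT φ.τ₃).exact

end PullbackComparison

section MorphismsOfExtensions

variable {F : ∀ Z A : C, Set (Ext Z A 1)}

lemma extClass_mem_of_hom_of_isFInflation (hF : IsAddSubfunctor F)
    (hclosed : InflationsClosed F) {R S : ShortComplex C} (ψ : R ⟶ S) (hR : R.ShortExact)
    (hS : S.ShortExact) (hψ : IsFInflation F ψ.τ₁) (hSF : hS.extClass ∈ F S.X₃ S.X₁) :
    hR.extClass ∈ F R.X₃ R.X₁ :=
  extClass_mem_of_comp_mk₀_mem hF hclosed hR hψ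
    (hR.extClass_naturality hS ψ ▸ hF.pull _ _ _ _ _ hSF)

lemma extClass_mem_of_hom_of_isFDeflation (hF : IsAddSubfunctor F)
    (hclosed : InflationsClosed F) {S T : ShortComplex C} (φ : S ⟶ T) (hS : S.ShortExact)
    (hT : T.ShortExact) (hφ : IsFDeflation F φ.τ₃) (hSF : hS.extClass ∈ F S.X₃ S.X₁) :
    hT.extClass ∈ F T.X₃ T.X₁ :=
  extClass_mem_of_mk₀_comp_mem hF hclosed hT hφ
    ((hS.extClass_naturality hT φ).symm ▸ hF.push _ _ _ _ _ hSF)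

lemma extClass_mem_of_outer_rows (hF : IsAddSubfunctor F) (hclosed : InflationsClosed F)
    {R S T : ShortComplex C} (ψ : R ⟶ S) (φ : S ⟶ T) [Mono ψ.τ₃] [Epi φ.τ₁]
    (hR : R.ShortExact) (hS : S.ShortExact) (hT : T.ShortExact) (hcol : ψ.τ₂ ≫ φ.τ₂ = 0)
    (hcolE : (ShortComplex.mk ψ.τ₂ φ.τ₂ hcol).ShortExact) (hcolF : hcolE.extClass ∈ F _ _)
    (hRF : hR.extClass ∈ F R.X₃ R.X₁) (hTF : hT.extClass ∈ F T.X₃ T.X₁) :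
    hS.extClass ∈ F S.X₃ S.X₁ := by
  have := hR.mono_f
  have := hS.epi_g
  have := hcolE.mono_f
  have hθ : (ShortComplex.mk _ _ (by ext <;> simp [hcol, ψ.comm₂₃] :
      (R.f ≫ ψ.τ₂) ≫ pullback.lift φ.τ₂ S.g φ.comm₂₃ = 0)).ShortExact :=
    .mk' (exact_comp_pullback_lift ψ hR.exact φ.comm₂₃ hcol hcolE.exact) inferInstance
      (epi_pullback_lift φ hT)
  have hθF : IsFDeflation F (pullback.lift φ.τ₂ S.g φ.comm₂₃) :=
    ⟨_, _, _, hθ, IsFInflation.extClass_mem hF hθ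
      (hclosed _ _ ⟨_, _, _, hR, hRF⟩ ⟨_, _, _, hcolE, hcolF⟩)⟩
  have hsndF : IsFDeflation F (pullback.snd T.g φ.τ₃) :=
    ⟨_, _, _, shortExact_pullback hT φ.τ₃,
      by rw [extClass_shortExact_pullback hT]; exact hF.pull _ _ _ _ _ hTF⟩
  have hgF := deflationsClosed_of_inflationsClosed hF hclosed _ _ hθF hsndF
  rw [pullback.lift_snd] at hgF
  exact IsFDeflation.extClass_mem hF hS hgF

end MorphismsOfExtensions

/-- For a closed additive subfunctor `F`, in a commutative 3×3 diagram of short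
exact sequences whose three columns are `F`-exact, the middle row is `F`-exact
if and only if the first and third rows are. -/
theorem middle_row_F_exact_iff_outer_rows
    (F : ∀ Z A : C, Set (Ext Z A 1)) (hF : IsAddSubfunctor F)
    (hclosed : InflationsClosed F)
    {A B Z D E G H I J : C}
    (a : A ⟶ B) (b : B ⟶ Z) (d : D ⟶ E) (e : E ⟶ G) (g : H ⟶ I) (h : I ⟶ J)
    (i : A ⟶ D) (j : B ⟶ E) (c : Z ⟶ G) (k : D ⟶ H) (l : E ⟶ I) (f : G ⟶ J)
    (w₁ : a ≫ b = 0) (w₂ : d ≫ e = 0) (w₃ : g ≫ h = 0)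
    (v₁ : i ≫ k = 0) (v₂ : j ≫ l = 0) (v₃ : c ≫ f = 0)
    (sq₁ : a ≫ j = i ≫ d) (sq₂ : b ≫ c = j ≫ e)
    (sq₃ : d ≫ l = k ≫ g) (sq₄ : e ≫ f = l ≫ h)
    (h₁ : (ShortComplex.mk a b w₁).ShortExact)
    (h₂ : (ShortComplex.mk d e w₂).ShortExact)
    (h₃ : (ShortComplex.mk g h w₃).ShortExact)
    (hc₁ : (ShortComplex.mk i k v₁).ShortExact)
    (hc₂ : (ShortComplex.mk j l v₂).ShortExact)
    (hc₃ : (ShortComplex.mk c f v₃).ShortExact)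
    (mc₁ : hc₁.extClass ∈ F H A) (mc₂ : hc₂.extClass ∈ F I B)
    (mc₃ : hc₃.extClass ∈ F J Z) :
    h₂.extClass ∈ F G D ↔ (h₁.extClass ∈ F Z A ∧ h₃.extClass ∈ F J H) := by
  let ψ : ShortComplex.mk a b w₁ ⟶ ShortComplex.mk d e w₂ := ⟨i, j, c, sq₁.symm, sq₂.symm⟩
  let φ : ShortComplex.mk d e w₂ ⟶ ShortComplex.mk g h w₃ := ⟨k, l, f, sq₃.symm, sq₄.symm⟩
  have : Mono c := hc₃.mono_f
  have : Epi k := hc₁.epi_g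
  constructor
  · intro h₂F
    exact ⟨extClass_mem_of_hom_of_isFInflation hF hclosed ψ h₁ h₂ ⟨_, _, _, hc₁, mc₁⟩ h₂F,
      extClass_mem_of_hom_of_isFDeflation hF hclosed φ h₂ h₃ ⟨_, _, _, hc₃, mc₃⟩ h₂F⟩
  · rintro ⟨h₁F, h₃F⟩
    exact extClass_mem_of_outer_rows hF hclosed ψ φ h₁ h₂ h₃ v₂ hc₂ mc₂ h₁F h₃F
end

section
/- Let C be an abelian category, and let E₁: 0 → A₁ → B₁ → C → 0 and E₂: 0 → A₂ → B₂ → C → 0 be two short exact sequences with the same cokernel C and classes δ₁, δ₂ ∈ Ext^1. Let M = B₁ ×_C B₂ be the pullback. Then there is a commutative 3×3 diagram with middle object M in which the middle row 0 → A₁ → M → B₂ → 0 realizes the pullback class δ₁·y₂ (where y₂: B₂ → C), the middle column 0 → A₂ → M → B₁ → 0 realizes δ₂·y₁, and the inclusions m₁: A₁ → M, m₂: A₂ → M satisfy m₁·δ₁ + m₂·δ₂ = 0 in Ext^1(C, M). -/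
open CategoryTheory CategoryTheory.Limits CategoryTheory.Abelian

universe w v u

variable {C : Type u} [Category.{v} C] [Abelian C] [HasExt.{w} C]

/-!
The middle row and column of the 3×3 diagram are the base changes of `E₁` along `y₂` and of
`E₂` along `y₁`, so naturality of `extClass` identifies their classes with `δ₁·y₂` and `δ₂·y₁`.
For the relation, the pullback square gives an extension `T : 0 → M → B₁ ⊞ B₂ → Z → 0`
(second map `(y₁, -y₂)`), and `m₁`, `m₂` extend to morphisms of extensions `E₁ → T` over `𝟙`
and `E₂ → T` over `-𝟙`; naturality then gives `m₁·δ₁ = [T] = -(m₂·δ₂)`.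
-/

namespace CategoryTheory

variable {𝒜 : Type*} [Category 𝒜] [Abelian 𝒜]

lemma IsPullback.shortExact_biprod {X₁ X₂ X₃ X₄ : 𝒜} {fst : X₁ ⟶ X₂} {snd : X₁ ⟶ X₃}
    {f : X₂ ⟶ X₄} {g : X₃ ⟶ X₄} (sq : IsPullback fst snd f g) [Epi f] :
    (ShortComplex.mk (biprod.lift fst snd) (biprod.desc f (-g)) (by simp [sq.w])).ShortExact where
  exact := sq.exact_shortComplex'
  mono_f := sq.mono_shortComplex'_f
  epi_g := epi_of_epi_fac (biprod.inl_desc f (-g))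

namespace ShortComplex.ShortExact

variable {S : ShortComplex 𝒜} {P Y : 𝒜} {fst : P ⟶ S.X₂} {snd : P ⟶ Y} {g : Y ⟶ S.X₃}
  {m : S.X₁ ⟶ P}

lemma shortExact_of_isPullback (hS : S.ShortExact) (sq : IsPullback fst snd S.g g)
    (hm_fst : m ≫ fst = S.f) (hm_snd : m ≫ snd = 0) :
    (ShortComplex.mk m snd hm_snd).ShortExact := by
  have := hS.mono_f
  have : Mono m := mono_of_mono_fac hm_fst
  have : Epi snd := (MorphismProperty.epimorphisms 𝒜).of_isPullback sq hS.epi_g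
  refine { exact := ?_ }
  rw [ShortComplex.exact_iff_exact_up_to_refinements]
  intro T x₂ hx₂
  obtain ⟨x₁, hx₁⟩ : ∃ x₁, x₁ ≫ S.f = x₂ ≫ fst :=
    ⟨_, hS.exact.lift_f (x₂ ≫ fst) (by simp [sq.w, reassoc_of% hx₂])⟩
  exact ⟨T, 𝟙 T, inferInstance, x₁, sq.hom_ext (by simp [hx₁, hm_fst]) (by simp [hm_snd, hx₂])⟩

lemma extClass_of_isPullback [HasExt 𝒜] (hS : S.ShortExact) (sq : IsPullback fst snd S.g g)
    (hm_fst : m ≫ fst = S.f) (hm_snd : m ≫ snd = 0) :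
    (hS.shortExact_of_isPullback sq hm_fst hm_snd).extClass =
      (Ext.mk₀ g).comp hS.extClass (zero_add 1) := by
  simpa using extClass_naturality (hS.shortExact_of_isPullback sq hm_fst hm_snd) hS
    { τ₁ := 𝟙 _, τ₂ := fst, τ₃ := g, comm₁₂ := by simpa using hm_fst.symm, comm₂₃ := sq.w }

end ShortComplex.ShortExact

lemma IsPullback.extClass_comp_add_extClass_comp_eq_zero [HasExt 𝒜]
    {A₁ B₁ Z A₂ B₂ P : 𝒜} {x₁ : A₁ ⟶ B₁} {y₁ : B₁ ⟶ Z} {x₂ : A₂ ⟶ B₂} {y₂ : B₂ ⟶ Z}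
    {w₁ : x₁ ≫ y₁ = 0} {w₂ : x₂ ≫ y₂ = 0}
    (h₁ : (ShortComplex.mk x₁ y₁ w₁).ShortExact) (h₂ : (ShortComplex.mk x₂ y₂ w₂).ShortExact)
    {fst : P ⟶ B₁} {snd : P ⟶ B₂} (sq : IsPullback fst snd y₁ y₂)
    {m₁ : A₁ ⟶ P} {m₂ : A₂ ⟶ P} (hm₁_fst : m₁ ≫ fst = x₁) (hm₁_snd : m₁ ≫ snd = 0)
    (hm₂_fst : m₂ ≫ fst = 0) (hm₂_snd : m₂ ≫ snd = x₂) :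
    h₁.extClass.comp (Ext.mk₀ m₁) (add_zero 1) +
      h₂.extClass.comp (Ext.mk₀ m₂) (add_zero 1) = 0 := by
  have := h₁.epi_g
  have hT := sq.shortExact_biprod
  have push₁ : h₁.extClass.comp (Ext.mk₀ m₁) (add_zero 1) = hT.extClass := by
    simpa using h₁.extClass_naturality hT
      { τ₁ := m₁, τ₂ := biprod.inl, τ₃ := 𝟙 Z,
        comm₁₂ := by apply biprod.hom_ext <;> simp [hm₁_fst, hm₁_snd]
        comm₂₃ := by simp }
  have push₂ : h₂.extClass.comp (Ext.mk₀ m₂) (add_zero 1) = -hT.extClass := by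
    simpa [Ext.mk₀_neg] using h₂.extClass_naturality hT
      { τ₁ := m₂, τ₂ := biprod.inr, τ₃ := -𝟙 Z,
        comm₁₂ := by apply biprod.hom_ext <;> simp [hm₂_fst, hm₂_snd]
        comm₂₃ := by simp }
  rw [push₁, push₂]
  exact add_neg_cancel _

end CategoryTheory

/-- Nakaoka–Palu's Proposition 3.15 in an abelian category: given two short exact
sequences over a common cokernel `Z`, the pullback `M = B₁ ×_Z B₂` fits in a
commutative 3×3 diagram, whose middle row realizes `δ₁ · y₂`, whose middle column
realizes `δ₂ · y₁`, and `m₁ · δ₁ + m₂ · δ₂ = 0`. -/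
theorem pullback_three_by_three
    {A₁ B₁ Z A₂ B₂ : C}
    (x₁ : A₁ ⟶ B₁) (y₁ : B₁ ⟶ Z) (x₂ : A₂ ⟶ B₂) (y₂ : B₂ ⟶ Z)
    (w₁ : x₁ ≫ y₁ = 0) (w₂ : x₂ ≫ y₂ = 0)
    (h₁ : (ShortComplex.mk x₁ y₁ w₁).ShortExact)
    (h₂ : (ShortComplex.mk x₂ y₂ w₂).ShortExact) :
    ∃ (m₁ : A₁ ⟶ pullback y₁ y₂) (m₂ : A₂ ⟶ pullback y₁ y₂)
      (_ : m₁ ≫ pullback.fst y₁ y₂ = x₁) (_ : m₂ ≫ pullback.snd y₁ y₂ = x₂)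
      (wr : m₁ ≫ pullback.snd y₁ y₂ = 0) (wc : m₂ ≫ pullback.fst y₁ y₂ = 0)
      (hr : (ShortComplex.mk m₁ (pullback.snd y₁ y₂) wr).ShortExact)
      (hc : (ShortComplex.mk m₂ (pullback.fst y₁ y₂) wc).ShortExact),
      hr.extClass = (Ext.mk₀ y₂).comp h₁.extClass (zero_add 1) ∧
      hc.extClass = (Ext.mk₀ y₁).comp h₂.extClass (zero_add 1) ∧
      h₁.extClass.comp (Ext.mk₀ m₁) (add_zero 1) +
        h₂.extClass.comp (Ext.mk₀ m₂) (add_zero 1) = 0 := by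
  have sq := IsPullback.of_hasPullback y₁ y₂
  have hm₁_fst := sq.lift_fst x₁ 0 (by simp [w₁])
  have hm₁_snd := sq.lift_snd x₁ 0 (by simp [w₁])
  have hm₂_fst := sq.lift_fst 0 x₂ (by simp [w₂])
  have hm₂_snd := sq.lift_snd 0 x₂ (by simp [w₂])
  exact ⟨_, _, hm₁_fst, hm₂_snd, hm₁_snd, hm₂_fst,
    h₁.shortExact_of_isPullback sq hm₁_fst hm₁_snd,
    h₂.shortExact_of_isPullback sq.flip hm₂_snd hm₂_fst,
    h₁.extClass_of_isPullback sq hm₁_fst hm₁_snd,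
    h₂.extClass_of_isPullback sq.flip hm₂_snd hm₂_fst,
    sq.extClass_comp_add_extClass_comp_eq_zero h₁ h₂ hm₁_fst hm₁_snd hm₂_fst hm₂_snd⟩
end

section
/- Let C be an abelian category and F an additive subfunctor of Ext^1 with the property that F-deflations are closed under composition. Given F-deflations g: B ↠ C with kernel class δ ∈ F(C,A) and e: E ↠ B with kernel class η ∈ F(B,D), the composite deflation g∘e: E ↠ C has kernel K fitting into an F-exact sequence 0 → D → K → A → 0 whose class is the pullback η·a, where a: A → B is the kernel inclusion of g. -/
open CategoryTheory CategoryTheory.Limits CategoryTheory.Abelian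

universe w v u

variable {C : Type u} [Category.{v} C] [Abelian C] [HasExt.{w} C]

/-!
The kernel of `e ≫ g` is the pullback `K = A ×_B E`, the base change of the kernel `a` of `g`
along `e`, and the kernel of its projection `p : K ⟶ A` is again `D`. So `0 → D → K → A → 0` maps
to `0 → D → E → B → 0` by `(𝟙, pullback.snd, a)`, and naturality of extension classes gives
class `η · a`, which lies in `F` because `F` is stable under pullback.
-/

namespace CategoryTheory

section

variable {C : Type*} [Category C] [HasZeroMorphisms C]
  {P A B E : C} {p : P ⟶ A} {k : P ⟶ E} {a : A ⟶ B} {e : E ⟶ B}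

noncomputable def IsPullback.isLimitKernelForkSnd (sq : IsPullback p k a e) {Z : C} {g : B ⟶ Z}
    {wg : a ≫ g = 0} (ha : IsLimit (KernelFork.ofι a wg)) :
    IsLimit (KernelFork.ofι k (show k ≫ e ≫ g = 0 by rw [← sq.w_assoc, wg, comp_zero])) := by
  have lift_a {W : C} (y : W ⟶ B) hy : Fork.IsLimit.lift ha y hy ≫ a = y :=
    Fork.IsLimit.lift_ι' ha y hy
  exact KernelFork.IsLimit.ofι _ _
    (fun x hx => sq.lift (Fork.IsLimit.lift ha (x ≫ e) (by simpa using hx)) x (lift_a _ _))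
    (fun _ _ => sq.lift_snd _ _ _)
    (fun _ _ _ hm => sq.hom_ext (Fork.IsLimit.hom_ext ha (by simp [sq.w, reassoc_of% hm, lift_a]))
      (by simpa using hm))

noncomputable def IsPullback.isLimitKernelForkFst (sq : IsPullback p k a e) {D : C} {d : D ⟶ E}
    {we : d ≫ e = 0} (hd : IsLimit (KernelFork.ofι d we)) {u : D ⟶ P}
    (hu : u ≫ k = d) (hup : u ≫ p = 0) :
    IsLimit (KernelFork.ofι u hup) := by
  have lift_d {W : C} (y : W ⟶ E) hy : Fork.IsLimit.lift hd y hy ≫ d = y :=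
    Fork.IsLimit.lift_ι' hd y hy
  exact KernelFork.IsLimit.ofι _ _
    (fun x hx => Fork.IsLimit.lift hd (x ≫ k) (by simp [← sq.w, reassoc_of% hx]))
    (fun _ hx => sq.hom_ext (by simp [hup, hx]) (by simp [hu, lift_d]))
    (fun _ _ _ hm => Fork.IsLimit.hom_ext hd (by simp [← hm, hu, lift_d]))

end

namespace ShortComplex

variable {C : Type*} [Category C] [Abelian C]

lemma ShortExact.of_isLimit_kernelFork {X₁ X₂ X₃ : C} {f : X₁ ⟶ X₂} {g : X₂ ⟶ X₃}
    {w : f ≫ g = 0} (hf : IsLimit (KernelFork.ofι f w)) [Epi g] :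
    (ShortComplex.mk f g w).ShortExact :=
  .mk' (exact_of_f_is_kernel _ hf) (mono_of_isLimit_fork hf) ‹_›

lemma ShortExact.extClass_eq_mk₀_comp_of_comm [HasExt C] {D K A E B : C}
    {u : D ⟶ K} {p : K ⟶ A} {wu : u ≫ p = 0} (hu : (ShortComplex.mk u p wu).ShortExact)
    {d : D ⟶ E} {e : E ⟶ B} {we : d ≫ e = 0} (he : (ShortComplex.mk d e we).ShortExact)
    (k : K ⟶ E) (a : A ⟶ B) (hd : u ≫ k = d) (hsq : k ≫ e = p ≫ a) :
    hu.extClass = (Ext.mk₀ a).comp he.extClass (zero_add 1) := by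
  simpa using hu.extClass_naturality he { τ₁ := 𝟙 D, τ₂ := k, τ₃ := a }

end ShortComplex

end CategoryTheory

theorem kernel_sequence_of_composite_deflation_general
    (F : ∀ Z A : C, Set (Ext Z A 1)) (hF : IsAddSubfunctor F)
    {A B Z D E : C}
    (a : A ⟶ B) (g : B ⟶ Z) (wg : a ≫ g = 0)
    (hg : (ShortComplex.mk a g wg).ShortExact)
    (d : D ⟶ E) (e : E ⟶ B) (we : d ≫ e = 0)
    (he : (ShortComplex.mk d e we).ShortExact)
    (heF : he.extClass ∈ F B D) :
    ∃ (K : C) (kk : K ⟶ E) (wk : kk ≫ (e ≫ g) = 0)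
      (_hk : (ShortComplex.mk kk (e ≫ g) wk).ShortExact)
      (u : D ⟶ K) (p : K ⟶ A) (wu : u ≫ p = 0)
      (hu : (ShortComplex.mk u p wu).ShortExact),
      u ≫ kk = d ∧ kk ≫ e = p ≫ a ∧
      hu.extClass = (Ext.mk₀ a).comp he.extClass (zero_add 1) ∧
      hu.extClass ∈ F A D := by
  have : Epi g := hg.epi_g
  have : Epi e := he.epi_g
  have sq := IsPullback.of_hasPullback a e
  have hk := ShortComplex.ShortExact.of_isLimit_kernelFork (sq.isLimitKernelForkSnd hg.fIsKernel)
  set u := sq.lift 0 d (by simp [we])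
  have hud : u ≫ pullback.snd a e = d := sq.lift_snd _ _ _
  have hu := ShortComplex.ShortExact.of_isLimit_kernelFork
    (sq.isLimitKernelForkFst he.fIsKernel hud (sq.lift_fst _ _ _))
  have hclass := hu.extClass_eq_mk₀_comp_of_comm he _ a hud sq.w.symm
  exact ⟨_, _, _, hk, u, _, _, hu, hud, sq.w.symm, hclass, hclass ▸ hF.pull B A D a _ heF⟩

/-- Given composable `F`-deflations `e : E ⟶ B` (with kernel `d : D ⟶ E`, class `η`)
and `g : B ⟶ Z` (with kernel `a : A ⟶ B`, class `δ`), where `F`-deflations compose,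
the kernel `K` of `g ∘ e` fits into an `F`-exact short exact sequence
`0 → D → K → A → 0` whose class is the pullback `η · a`. -/
theorem kernel_sequence_of_composite_deflation
    (F : ∀ Z A : C, Set (Ext Z A 1)) (hF : IsAddSubfunctor F)
    (hclosed : DeflationsClosed F)
    {A B Z D E : C}
    (a : A ⟶ B) (g : B ⟶ Z) (wg : a ≫ g = 0)
    (hg : (ShortComplex.mk a g wg).ShortExact)
    (hgF : hg.extClass ∈ F Z A)
    (d : D ⟶ E) (e : E ⟶ B) (we : d ≫ e = 0)
    (he : (ShortComplex.mk d e we).ShortExact)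
    (heF : he.extClass ∈ F B D) :
    ∃ (K : C) (kk : K ⟶ E) (wk : kk ≫ (e ≫ g) = 0)
      (_hk : (ShortComplex.mk kk (e ≫ g) wk).ShortExact)
      (u : D ⟶ K) (p : K ⟶ A) (wu : u ≫ p = 0)
      (hu : (ShortComplex.mk u p wu).ShortExact),
      u ≫ kk = d ∧ kk ≫ e = p ≫ a ∧
      hu.extClass = (Ext.mk₀ a).comp he.extClass (zero_add 1) ∧
      hu.extClass ∈ F A D :=
  kernel_sequence_of_composite_deflation_general F hF a g wg hg d e we he heF
end
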